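/- Let δ be the 2n×2n block matrix (blocks of sizes r,m,m,r,m,m) δ = [[1_r,0,0,0,0,0],[0,1_m,0,0,0,0],[0,0,1_m,0,0,0],[0,0,0,1_r,0,0],[0,0,-1_m,0,1_m,0],[0,ε·1_m,0,0,0,1_m]]. Then for every g ∈ G(Φ), the matrix δ·ι(g,g)·δ^{-1} is block upper triangular of the form [[*,*],[0_n,*]] (i.e., lies in the Siegel parabolic P of H), where ι is the doubling map ι(g₁,g₂) = R·diag(g₁,g₂)·R^{-1}. -/

import Mathlib

open Matrix

namespace Stmt3

variable {D : Type*} [Ring D] [StarRing D]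

/-- Index type for the `(m,r,m)` block decomposition of size `n = 2m+r`. -/
abbrev Bidx (m r : ℕ) := Fin m ⊕ (Fin r ⊕ Fin m)

/-- Index type for the `(r,m,m)` block decomposition of size `n = 2m+r`. -/
abbrev Aidx (m r : ℕ) := Fin r ⊕ (Fin m ⊕ Fin m)

/-- Assemble a 3×3 block matrix with block sizes `(m, r, m)`. -/
def blk3 {m r : ℕ} (a : Matrix (Fin m) (Fin m) D) (f : Matrix (Fin m) (Fin r) D)
    (b : Matrix (Fin m) (Fin m) D) (h : Matrix (Fin r) (Fin m) D)
    (e : Matrix (Fin r) (Fin r) D) (jj : Matrix (Fin r) (Fin m) D)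
    (c : Matrix (Fin m) (Fin m) D) (k : Matrix (Fin m) (Fin r) D)
    (d : Matrix (Fin m) (Fin m) D) : Matrix (Bidx m r) (Bidx m r) D :=
  Matrix.of fun p q => match p, q with
    | Sum.inl i, Sum.inl j => a i j
    | Sum.inl i, Sum.inr (Sum.inl j) => f i j
    | Sum.inl i, Sum.inr (Sum.inr j) => b i j
    | Sum.inr (Sum.inl i), Sum.inl j => h i j
    | Sum.inr (Sum.inl i), Sum.inr (Sum.inl j) => e i j
    | Sum.inr (Sum.inl i), Sum.inr (Sum.inr j) => jj i j
    | Sum.inr (Sum.inr i), Sum.inl j => c i j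
    | Sum.inr (Sum.inr i), Sum.inr (Sum.inl j) => k i j
    | Sum.inr (Sum.inr i), Sum.inr (Sum.inr j) => d i j

/-- Assemble a 3×3 block matrix with row block sizes `(r, m, m)` and column block
sizes `(m, r, m)`. -/
def blk3AB {m r : ℕ} (x11 : Matrix (Fin r) (Fin m) D) (x12 : Matrix (Fin r) (Fin r) D)
    (x13 : Matrix (Fin r) (Fin m) D) (x21 : Matrix (Fin m) (Fin m) D)
    (x22 : Matrix (Fin m) (Fin r) D) (x23 : Matrix (Fin m) (Fin m) D)
    (x31 : Matrix (Fin m) (Fin m) D) (x32 : Matrix (Fin m) (Fin r) D)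
    (x33 : Matrix (Fin m) (Fin m) D) : Matrix (Aidx m r) (Bidx m r) D :=
  Matrix.of fun p q => match p, q with
    | Sum.inl i, Sum.inl j => x11 i j
    | Sum.inl i, Sum.inr (Sum.inl j) => x12 i j
    | Sum.inl i, Sum.inr (Sum.inr j) => x13 i j
    | Sum.inr (Sum.inl i), Sum.inl j => x21 i j
    | Sum.inr (Sum.inl i), Sum.inr (Sum.inl j) => x22 i j
    | Sum.inr (Sum.inl i), Sum.inr (Sum.inr j) => x23 i j
    | Sum.inr (Sum.inr i), Sum.inl j => x31 i j
    | Sum.inr (Sum.inr i), Sum.inr (Sum.inl j) => x32 i j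
    | Sum.inr (Sum.inr i), Sum.inr (Sum.inr j) => x33 i j

/-- The matrix `Φ = [[0,0,1_m],[0,θ,0],[ε·1_m,0,0]]`. -/
def PhiMat {m r : ℕ} (ε : D) (θ : Matrix (Fin r) (Fin r) D) : Matrix (Bidx m r) (Bidx m r) D :=
  blk3 0 0 1 0 θ 0 (ε • 1) 0 0

/-- The matrix `J_n = [[0,1_n],[ε·1_n,0]]` in the `(r,m,m)` basis. -/
def Jmat (m r : ℕ) (ε : D) : Matrix (Aidx m r ⊕ Aidx m r) (Aidx m r ⊕ Aidx m r) D :=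
  fromBlocks 0 1 (ε • 1) 0

/-- The explicit change-of-basis matrix `R` of the doubling method, with row blocks
of sizes `(r,m,m,r,m,m)` and column blocks of sizes `(m,r,m,m,r,m)`. -/
def Rmat {m r : ℕ} (ε : D) (θ : Matrix (Fin r) (Fin r) D) [Invertible (2 : D)]
    [Invertible θ] : Matrix (Aidx m r ⊕ Aidx m r) (Bidx m r ⊕ Bidx m r) D :=
  fromBlocks
    (blk3AB 0 ((⅟(2:D) * ε) • 1) 0 0 0 0 1 0 0)
    (blk3AB 0 ((⅟(2:D) * ε) • 1) 0 0 0 (-(ε • 1)) 0 0 0)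
    (blk3AB 0 (⅟θ) 0 0 0 0 0 0 1)
    (blk3AB 0 (-(⅟θ)) 0 1 0 0 0 0 0)

/-- Assemble a 3×3 block matrix with block sizes `(r, m, m)`. -/
def blk3A {m r : ℕ} (x11 : Matrix (Fin r) (Fin r) D) (x12 : Matrix (Fin r) (Fin m) D)
    (x13 : Matrix (Fin r) (Fin m) D) (x21 : Matrix (Fin m) (Fin r) D)
    (x22 : Matrix (Fin m) (Fin m) D) (x23 : Matrix (Fin m) (Fin m) D)
    (x31 : Matrix (Fin m) (Fin r) D) (x32 : Matrix (Fin m) (Fin m) D)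
    (x33 : Matrix (Fin m) (Fin m) D) : Matrix (Aidx m r) (Aidx m r) D :=
  Matrix.of fun p q => match p, q with
    | Sum.inl i, Sum.inl j => x11 i j
    | Sum.inl i, Sum.inr (Sum.inl j) => x12 i j
    | Sum.inl i, Sum.inr (Sum.inr j) => x13 i j
    | Sum.inr (Sum.inl i), Sum.inl j => x21 i j
    | Sum.inr (Sum.inl i), Sum.inr (Sum.inl j) => x22 i j
    | Sum.inr (Sum.inl i), Sum.inr (Sum.inr j) => x23 i j
    | Sum.inr (Sum.inr i), Sum.inl j => x31 i j
    | Sum.inr (Sum.inr i), Sum.inr (Sum.inl j) => x32 i j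
    | Sum.inr (Sum.inr i), Sum.inr (Sum.inr j) => x33 i j

/-- The matrix `δ` of the doubling method: the identity except for the blocks
`-1_m` in position (5,3) and `ε·1_m` in position (6,2), with block sizes
`(r,m,m,r,m,m)`. -/
def deltaMat {m r : ℕ} (ε : D) :
    Matrix (Aidx m r ⊕ Aidx m r) (Aidx m r ⊕ Aidx m r) D :=
  fromBlocks 1 0 (blk3A 0 0 0 0 0 (-1) 0 (ε • 1) 0) 1

/-! Since `ε² = 1`, the product `δR` has the block shape `[[A, B], [K, -K]]`, and its lower-left
block `K` has a left inverse. The lower-left block of `δR · (δR)⁻¹ = 1` is then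
`K (N₁₁ - N₂₁) = 0` for the left column `(N₁₁, N₂₁)` of `(δR)⁻¹`, so `N₁₁ = N₂₁`; hence the
lower-left block of `δR · diag(g, g) · (δR)⁻¹` is `K g N₁₁ - K g N₂₁ = 0`, for every `g`. -/

section

variable {S : Type*} [Ring S]

theorem toBlocks₂₁_mul_fromBlocks_diag_mul_eq_zero {n o : Type*} [Fintype n] [Fintype o]
    [DecidableEq n] [DecidableEq o] {M : Matrix (n ⊕ n) (o ⊕ o) S}
    {N : Matrix (o ⊕ o) (n ⊕ n) S} (hMN : M * N = 1) (hM : M.toBlocks₂₂ = -M.toBlocks₂₁)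
    {L : Matrix o n S} (hL : L * M.toBlocks₂₁ = 1) (g : Matrix o o S) :
    (M * fromBlocks g 0 0 g * N).toBlocks₂₁ = 0 := by
  rw [← fromBlocks_toBlocks M, ← fromBlocks_toBlocks N, hM] at hMN ⊢
  set K := M.toBlocks₂₁
  have hKN : K * (N.toBlocks₁₁ - N.toBlocks₂₁) = 0 := by
    have h₂₁ := congrArg toBlocks₂₁ hMN
    rw [fromBlocks_multiply, toBlocks_fromBlocks₂₁, ← fromBlocks_one,
      toBlocks_fromBlocks₂₁] at h₂₁
    rw [Matrix.mul_sub, ← h₂₁, Matrix.neg_mul, sub_eq_add_neg]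
  have hN : N.toBlocks₁₁ - N.toBlocks₂₁ = 0 := by
    rw [← Matrix.one_mul (_ - _), ← hL, Matrix.mul_assoc, hKN, Matrix.mul_zero]
  rw [fromBlocks_multiply, fromBlocks_multiply, toBlocks_fromBlocks₂₁]
  simp only [Matrix.mul_zero, add_zero, zero_add, Matrix.neg_mul]
  rw [← sub_eq_add_neg, ← Matrix.mul_sub, hN, Matrix.mul_zero]

variable {m r : ℕ} (ε : S) [Invertible (2 : S)] (θ : Matrix (Fin r) (Fin r) S) [Invertible θ]

theorem toBlocks₂₁_deltaMat_mul_Rmat :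
    toBlocks₂₁ (deltaMat (m := m) (r := r) ε * Rmat (m := m) ε θ) =
      blk3AB 0 (⅟θ) 0 (-1) 0 0 0 0 1 := by
  rw [deltaMat, Rmat, fromBlocks_multiply, toBlocks_fromBlocks₂₁, Matrix.one_mul]
  ext (i|i|i) (j|j|j) <;>
    simp [blk3A, blk3AB, Matrix.mul_apply, Fintype.sum_sum_type, Matrix.one_apply]

theorem toBlocks₂₂_deltaMat_mul_Rmat (hε : ε * ε = 1) :
    toBlocks₂₂ (deltaMat (m := m) (r := r) ε * Rmat (m := m) ε θ) =
      -toBlocks₂₁ (deltaMat (m := m) (r := r) ε * Rmat (m := m) ε θ) := by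
  rw [toBlocks₂₁_deltaMat_mul_Rmat, deltaMat, Rmat, fromBlocks_multiply,
    toBlocks_fromBlocks₂₂, Matrix.one_mul]
  ext (i|i|i) (j|j|j) <;>
    simp [blk3A, blk3AB, Matrix.mul_apply, Fintype.sum_sum_type, Matrix.one_apply, hε]

theorem exists_mul_toBlocks₂₁_deltaMat_mul_Rmat_eq_one :
    ∃ L : Matrix (Bidx m r) (Aidx m r) S,
      L * toBlocks₂₁ (deltaMat (m := m) (r := r) ε * Rmat (m := m) ε θ) = 1 := by
  refine ⟨fromBlocks 0 (fromCols (-1) 0) (fromRows θ 0) (fromBlocks 0 0 0 1), ?_⟩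
  rw [toBlocks₂₁_deltaMat_mul_Rmat]
  ext (i|i|i) (j|j|j) <;>
    simp [blk3AB, Matrix.mul_apply, Fintype.sum_sum_type, Matrix.one_apply]
  all_goals simp [← Matrix.mul_apply, Matrix.one_apply]

end

theorem delta_conjugate_in_Siegel_parabolic_general {m r : ℕ} (ε : D) (hε : ε = 1 ∨ ε = -1)
    [Invertible (2 : D)] (θ : Matrix (Fin r) (Fin r) D) [Invertible θ]
    (Rinv : Matrix (Bidx m r ⊕ Bidx m r) (Aidx m r ⊕ Aidx m r) D)
    (hR₁ : Rmat (m := m) ε θ * Rinv = 1)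
    (δinv : Matrix (Aidx m r ⊕ Aidx m r) (Aidx m r ⊕ Aidx m r) D)
    (hδ₁ : deltaMat (m := m) (r := r) ε * δinv = 1)
    (g : Matrix (Bidx m r) (Bidx m r) D) :
    ∀ (i : Aidx m r) (j : Aidx m r),
      (deltaMat (m := m) (r := r) ε * (Rmat (m := m) ε θ * fromBlocks g 0 0 g * Rinv) * δinv)
        (Sum.inr i) (Sum.inl j) = 0 := by
  intro i j
  have hεε : ε * ε = 1 := by rcases hε with rfl | rfl <;> simp
  have hinv : deltaMat (m := m) (r := r) ε * Rmat (m := m) ε θ * (Rinv * δinv) = 1 := by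
    rw [Matrix.mul_assoc, ← Matrix.mul_assoc _ Rinv, hR₁, Matrix.one_mul, hδ₁]
  obtain ⟨L, hL⟩ := exists_mul_toBlocks₂₁_deltaMat_mul_Rmat_eq_one (m := m) ε θ
  have h₂₁ := toBlocks₂₁_mul_fromBlocks_diag_mul_eq_zero hinv
    (toBlocks₂₂_deltaMat_mul_Rmat ε θ hεε) hL g
  simp only [Matrix.mul_assoc] at h₂₁ ⊢
  exact congrFun (congrFun h₂₁ i) j

/-- `δ · ι(g,g) · δ⁻¹` lies in the Siegel parabolic `P` of `H`,
i.e. its lower-left `n×n` block vanishes. -/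
theorem delta_conjugate_in_Siegel_parabolic {m r : ℕ} (ε : D) (hε : ε = 1 ∨ ε = -1)
    [Invertible (2 : D)] (θ : Matrix (Fin r) (Fin r) D) [Invertible θ]
    (hθ : θᴴ = ε • θ)
    (Rinv : Matrix (Bidx m r ⊕ Bidx m r) (Aidx m r ⊕ Aidx m r) D)
    (hR₁ : Rmat (m := m) ε θ * Rinv = 1) (hR₂ : Rinv * Rmat (m := m) ε θ = 1)
    (δinv : Matrix (Aidx m r ⊕ Aidx m r) (Aidx m r ⊕ Aidx m r) D)
    (hδ₁ : deltaMat (m := m) (r := r) ε * δinv = 1)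
    (hδ₂ : δinv * deltaMat (m := m) (r := r) ε = 1)
    (g : Matrix (Bidx m r) (Bidx m r) D) (hg : IsUnit g)
    (hG : g * PhiMat ε θ * gᴴ = PhiMat ε θ) :
    ∀ (i : Aidx m r) (j : Aidx m r),
      (deltaMat (m := m) (r := r) ε * (Rmat (m := m) ε θ * fromBlocks g 0 0 g * Rinv) * δinv)
        (Sum.inr i) (Sum.inl j) = 0 :=
  delta_conjugate_in_Siegel_parabolic_general ε hε θ Rinv hR₁ δinv hδ₁ g

end Stmt3
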